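/- arXiv:2505.24668 — 2 statements merged into one kernel-verified Lean document; each statement's English description precedes it below -/
import Mathlib

section
/- Residue formula for eigenvector alignment: Let B ∈ ℝ^{d×d} symmetric, λ₁ > 0, u a unit vector, S = B + λ₁ u uᵀ. Let ν be a simple eigenvalue of S that is not an eigenvalue of B, with unit eigenvector w. Define f(α) := uᵀ (B - α I)⁻¹ u. Then ⟨u, w⟩² = 1 / (λ₁² f'(ν)), where f'(ν) = uᵀ (B - ν I)⁻² u. -/
open Matrix

/-!
If `(B + λ u uᵀ) w = ν w` and `B - ν` is invertible, then `w = -λ ⟨u, w⟩ (B - ν)⁻¹ u`: the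
eigenvector is the resolvent applied to `u`. Taking the squared norm and using the symmetry of
`B` gives `1 = |w|² = λ² ⟨u, w⟩² · uᵀ (B - ν)⁻² u`, which is the claim.
-/

namespace Matrix

theorem mulVec_dotProduct_mulVec_self_of_transpose_eq {n R : Type*} [Fintype n] [CommSemiring R]
    {A : Matrix n n R} (hA : Aᵀ = A) (x : n → R) :
    (A *ᵥ x) ⬝ᵥ (A *ᵥ x) = x ⬝ᵥ ((A * A) *ᵥ x) := by
  rw [← mulVec_mulVec, dotProduct_mulVec, ← mulVec_transpose, hA, dotProduct_comm]

variable {n K : Type*} [Fintype n] [DecidableEq n] [CommRing K]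

theorem mulVec_sub_smul_eq_of_rankOne_update {B : Matrix n n K} {lam ν : K} {u w : n → K}
    (hew : (B + lam • vecMulVec u u) *ᵥ w = ν • w) :
    (B - ν • 1) *ᵥ w = (-(lam * (u ⬝ᵥ w))) • u := by
  rw [add_mulVec, smul_mulVec, vecMulVec_mulVec, op_smul_eq_smul, smul_smul] at hew
  rw [sub_mulVec, smul_mulVec, one_mulVec, ← hew, neg_smul]
  abel

theorem eq_smul_resolvent_of_rankOne_update {B : Matrix n n K} {lam ν : K} {u w : n → K}
    (hew : (B + lam • vecMulVec u u) *ᵥ w = ν • w) (hν : IsUnit (B - ν • 1).det) :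
    w = (-(lam * (u ⬝ᵥ w))) • ((B - ν • 1)⁻¹ *ᵥ u) := by
  rw [← mulVec_smul, ← mulVec_sub_smul_eq_of_rankOne_update hew, mulVec_mulVec,
    nonsing_inv_mul _ hν, one_mulVec]

theorem sq_mul_dotProduct_resolvent_sq_eq_of_rankOne_update {B : Matrix n n K} (hB : Bᵀ = B)
    {lam ν : K} {u w : n → K} (hew : (B + lam • vecMulVec u u) *ᵥ w = ν • w)
    (hν : IsUnit (B - ν • 1).det) :
    (lam * (u ⬝ᵥ w)) ^ 2 * (u ⬝ᵥ (((B - ν • 1)⁻¹ * (B - ν • 1)⁻¹) *ᵥ u)) = w ⬝ᵥ w := by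
  have hR : ((B - ν • 1)⁻¹)ᵀ = (B - ν • 1)⁻¹ := by
    rw [transpose_nonsing_inv, transpose_sub, transpose_smul, transpose_one, hB]
  conv_rhs => rw [eq_smul_resolvent_of_rankOne_update hew hν]
  rw [smul_dotProduct, dotProduct_smul, mulVec_dotProduct_mulVec_self_of_transpose_eq hR,
    smul_eq_mul, smul_eq_mul]
  ring

end Matrix

theorem stmt15_general {d : ℕ} (B : Matrix (Fin d) (Fin d) ℝ) (hB : Bᵀ = B)
    (lam : ℝ) (u : Fin d → ℝ)
    (S : Matrix (Fin d) (Fin d) ℝ) (hS : S = B + lam • vecMulVec u u)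
    (ν : ℝ) (w : Fin d → ℝ) (hw : ∑ i, w i ^ 2 = 1) (hew : S *ᵥ w = ν • w)
    (hnotB : IsUnit (B - ν • (1 : Matrix (Fin d) (Fin d) ℝ)).det) :
    (u ⬝ᵥ w) ^ 2 =
      1 / (lam ^ 2 *
        (u ⬝ᵥ (((B - ν • (1 : Matrix (Fin d) (Fin d) ℝ))⁻¹ *
          (B - ν • (1 : Matrix (Fin d) (Fin d) ℝ))⁻¹) *ᵥ u))) := by
  subst hS
  have key := sq_mul_dotProduct_resolvent_sq_eq_of_rankOne_update hB hew hnotB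
  have hww : w ⬝ᵥ w = 1 := by simpa only [dotProduct, sq] using hw
  apply eq_one_div_of_mul_eq_one_left
  rw [← hww, ← key]
  ring

/-- Residue formula for eigenvector alignment: for a simple eigenvalue `ν` of
`S = B + λ₁ u uᵀ` that is not an eigenvalue of `B`, with unit eigenvector `w`,
`⟨u, w⟩² = 1 / (λ₁² f'(ν))` where `f'(ν) = uᵀ (B - ν I)⁻² u`. -/
theorem stmt15 {d : ℕ} (B : Matrix (Fin d) (Fin d) ℝ) (hB : Bᵀ = B)
    (lam : ℝ) (hlam : 0 < lam) (u : Fin d → ℝ) (hu : ∑ i, u i ^ 2 = 1)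
    (S : Matrix (Fin d) (Fin d) ℝ) (hS : S = B + lam • vecMulVec u u)
    (ν : ℝ) (w : Fin d → ℝ) (hw : ∑ i, w i ^ 2 = 1) (hew : S *ᵥ w = ν • w)
    (hsimple : ∀ w' : Fin d → ℝ, S *ᵥ w' = ν • w' → ∃ c : ℝ, w' = c • w)
    (hnotB : IsUnit (B - ν • (1 : Matrix (Fin d) (Fin d) ℝ)).det) :
    (u ⬝ᵥ w) ^ 2 =
      1 / (lam ^ 2 *
        (u ⬝ᵥ (((B - ν • (1 : Matrix (Fin d) (Fin d) ℝ))⁻¹ *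
          (B - ν • (1 : Matrix (Fin d) (Fin d) ℝ))⁻¹) *ᵥ u))) :=
  stmt15_general B hB lam u S hS ν w hw hew hnotB
end

section
/- Frobenius norm of projected pseudoinverse solution: Let Y, Z ∈ ℝ^{d×n} with Z of full column rank n, Z = Ū D̄ V̄ᵀ its reduced SVD with squared singular values λ̄_j, and Y = U_Y D_Y V_Yᵀ with squared singular values λ_i and right singular vectors v_i. Then for W = P_k(Y) Z⁺, we have ‖W‖_F² = Σ_{j=1}^n λ̄_j⁻¹ Σ_{i=1}^k λ_i (v_iᵀ v̄_j)², where v̄_j are the right singular vectors of Z. -/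
open Matrix

/-- Squared Frobenius norm. -/
noncomputable def frobSq {d n : ℕ} (M : Matrix (Fin d) (Fin n) ℝ) : ℝ :=
  ∑ i, ∑ j, (M i j) ^ 2

/-- Rectangular diagonal matrix. -/
noncomputable def rectDiag (d n : ℕ) (f : Fin n → ℝ) : Matrix (Fin d) (Fin n) ℝ :=
  Matrix.of fun i j => if (i : ℕ) = (j : ℕ) then f j else 0

/-!
`W` factors as `U_Y · (D_k · C) · Ūᵀ` with `C = V_Yᵀ V̄ D̄⁻¹`, where `D_k` is the truncated
rectangular diagonal factor. The Frobenius norm only sees `Mᵀ M`, so the factors `U_Y` and `Ūᵀ`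
with orthonormal columns drop out and `D_k` may be replaced by the square `diagonal` of its
entries. The entries of `diagonal sₖ · C` are `sₖ i (v_i ⬝ v̄_j) / s̄_j`, and summing their squares
gives the formula.
-/

lemma frobSq_eq_trace {d n : ℕ} (M : Matrix (Fin d) (Fin n) ℝ) :
    frobSq M = (Mᵀ * M).trace := by
  simp only [frobSq, trace, diag, mul_apply, transpose_apply, pow_two]
  exact Finset.sum_comm

lemma frobSq_transpose {d n : ℕ} (M : Matrix (Fin d) (Fin n) ℝ) : frobSq Mᵀ = frobSq M := by
  simp only [frobSq, transpose_apply]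
  exact Finset.sum_comm

lemma frobSq_mul_of_transpose_mul_self_eq {m m' d n : ℕ} {A : Matrix (Fin m) (Fin d) ℝ}
    {B : Matrix (Fin m') (Fin d) ℝ} (h : Aᵀ * A = Bᵀ * B) (C : Matrix (Fin d) (Fin n) ℝ) :
    frobSq (A * C) = frobSq (B * C) := by
  simp only [frobSq_eq_trace, transpose_mul, Matrix.mul_assoc]
  rw [← Matrix.mul_assoc Aᵀ, h, Matrix.mul_assoc]

lemma frobSq_mul_left {m d n : ℕ} {U : Matrix (Fin m) (Fin d) ℝ} (hU : Uᵀ * U = 1)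
    (A : Matrix (Fin d) (Fin n) ℝ) : frobSq (U * A) = frobSq A := by
  simpa using frobSq_mul_of_transpose_mul_self_eq (B := (1 : Matrix (Fin d) (Fin d) ℝ))
    (by simpa using hU) A

lemma frobSq_mul_transpose_right {m d n : ℕ} {U : Matrix (Fin m) (Fin n) ℝ} (hU : Uᵀ * U = 1)
    (A : Matrix (Fin d) (Fin n) ℝ) : frobSq (A * Uᵀ) = frobSq A := by
  rw [← frobSq_transpose, transpose_mul, transpose_transpose, frobSq_mul_left hU,
    frobSq_transpose]

lemma rectDiag_transpose_mul_self {d n : ℕ} (hn : n ≤ d) (f : Fin n → ℝ) :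
    (rectDiag d n f)ᵀ * rectDiag d n f = diagonal (fun i => f i ^ 2) := by
  ext i j
  rw [mul_apply, Finset.sum_eq_single (Fin.castLE hn i)]
  · by_cases hij : i = j
    · subst hij
      simp [rectDiag, pow_two]
    · simp [rectDiag, Fin.val_ne_of_ne hij, hij]
  · intro l _ hl
    have hli : (l : ℕ) ≠ i := fun h => hl (Fin.ext h)
    simp [rectDiag, hli]
  · simp

lemma frobSq_rectDiag_mul {d n m : ℕ} (hn : n ≤ d) (f : Fin n → ℝ)
    (C : Matrix (Fin n) (Fin m) ℝ) :
    frobSq (rectDiag d n f * C) = frobSq (diagonal f * C) :=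
  frobSq_mul_of_transpose_mul_self_eq (by
    rw [rectDiag_transpose_mul_self hn, diagonal_transpose, diagonal_mul_diagonal]
    simp only [pow_two]) C

lemma inv_diagonal_of_ne_zero {ι K : Type*} [Fintype ι] [DecidableEq ι] [Field K] {s : ι → K}
    (hs : ∀ j, s j ≠ 0) :
    (diagonal s)⁻¹ = diagonal (fun j => (s j)⁻¹) := by
  apply inv_eq_right_inv
  rw [diagonal_mul_diagonal, ← diagonal_one]
  exact congrArg diagonal (funext fun j => mul_inv_cancel₀ (hs j))

theorem stmt17_general {d n k : ℕ} (hn : n ≤ d)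
    (Ub : Matrix (Fin d) (Fin n) ℝ) (hUb : Ubᵀ * Ub = 1)
    (Vb : Matrix (Fin n) (Fin n) ℝ)
    (sb : Fin n → ℝ) (hsb : ∀ j, 0 < sb j)
    (UY : Matrix (Fin d) (Fin d) ℝ) (hUY : UYᵀ * UY = 1)
    (VY : Matrix (Fin n) (Fin n) ℝ)
    (s : Fin n → ℝ)
    (W : Matrix (Fin d) (Fin d) ℝ)
    (hW : W = (UY * rectDiag d n (fun i => if (i : ℕ) < k then s i else 0) * VYᵀ) *
      (Vb * (Matrix.diagonal sb)⁻¹ * Ubᵀ)) :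
    frobSq W = ∑ j : Fin n, (sb j ^ 2)⁻¹ *
      ∑ i : Fin n, (if (i : ℕ) < k then
        s i ^ 2 * ((fun l => VY l i) ⬝ᵥ (fun l => Vb l j)) ^ 2 else 0) := by
  set sk : Fin n → ℝ := fun i => if (i : ℕ) < k then s i else 0
  have hW' : W = UY * (rectDiag d n sk * (VYᵀ * Vb * diagonal fun j => (sb j)⁻¹)) * Ubᵀ := by
    rw [hW, inv_diagonal_of_ne_zero fun j => (hsb j).ne']
    simp only [Matrix.mul_assoc]
  rw [hW', frobSq_mul_transpose_right hUb, frobSq_mul_left hUY, frobSq_rectDiag_mul hn, frobSq,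
    Finset.sum_comm]
  refine Finset.sum_congr rfl fun j _ => ?_
  rw [Finset.mul_sum]
  refine Finset.sum_congr rfl fun i _ => ?_
  have hdot : (VYᵀ * Vb) i j = (fun l => VY l i) ⬝ᵥ (fun l => Vb l j) := rfl
  rw [diagonal_mul, mul_diagonal, hdot]
  by_cases hi : (i : ℕ) < k <;> simp only [sk, hi, if_true, if_false] <;> ring

/-- Frobenius norm of the projected pseudoinverse solution `W = P_k(Y) Z⁺`:
`‖W‖_F² = Σ_j λ̄_j⁻¹ Σ_{i<k} λ_i (vᵢᵀ v̄_j)²`. -/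
theorem stmt17 {d n k : ℕ} (hn : n ≤ d) (hk : k ≤ n)
    (Z Y : Matrix (Fin d) (Fin n) ℝ)
    (Ub : Matrix (Fin d) (Fin n) ℝ) (hUb : Ubᵀ * Ub = 1)
    (Vb : Matrix (Fin n) (Fin n) ℝ) (hVb : Vbᵀ * Vb = 1)
    (sb : Fin n → ℝ) (hsb : ∀ j, 0 < sb j)
    (hZ : Z = Ub * Matrix.diagonal sb * Vbᵀ)
    (UY : Matrix (Fin d) (Fin d) ℝ) (hUY : UYᵀ * UY = 1)
    (VY : Matrix (Fin n) (Fin n) ℝ) (hVY : VYᵀ * VY = 1)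
    (s : Fin n → ℝ) (hs : ∀ j, 0 ≤ s j)
    (hY : Y = UY * rectDiag d n s * VYᵀ)
    (W : Matrix (Fin d) (Fin d) ℝ)
    (hW : W = (UY * rectDiag d n (fun i => if (i : ℕ) < k then s i else 0) * VYᵀ) *
      (Vb * (Matrix.diagonal sb)⁻¹ * Ubᵀ)) :
    frobSq W = ∑ j : Fin n, (sb j ^ 2)⁻¹ *
      ∑ i : Fin n, (if (i : ℕ) < k then
        s i ^ 2 * ((fun l => VY l i) ⬝ᵥ (fun l => Vb l j)) ^ 2 else 0) :=
  stmt17_general hn Ub hUb Vb sb hsb UY hUY VY s W hW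
end
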